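/- Let (V, ≤, ℓ) be a finite {a, b}-labeled DAG and let i ∈ ℕ. If V contains an antichain of cardinality 2i, then V has a topological sort whose achieved word contains a^i or b^i as a factor. -/

import Mathlib

namespace CTS

/-- The two-letter alphabet `{a, b}`. -/
inductive AB : Type
  | a : AB
  | b : AB
deriving DecidableEq

/-- A topological sort of the finite partial order `V`: a duplicate-free list containing
every element, such that whenever `u < v`, `u` occurs before `v`. -/
def IsTopSort {V : Type*} [PartialOrder V] (σ : List V) : Prop :=
  σ.Nodup ∧ (∀ v : V, v ∈ σ) ∧ σ.Pairwise (fun u v => ¬ v < u)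

/-!
Half of the antichain carries a single label `c`; call that half `A`. List first everything not
above any element of `A`, then `A` in any order, then everything else, each block sorted along a
linear extension. No element of a block lies strictly below an element of an earlier block, the
case of `A` and the last block being exactly where the antichain property is needed. The block `A`
then contributes the factor `c^i`.
-/

instance : Fintype AB := ⟨{.a, .b}, fun c => by cases c <;> simp⟩

instance : Nonempty AB := ⟨.a⟩

theorem card_AB : Fintype.card AB = 2 := rfl

theorem Finset.exists_subset_card_eq_forall_eq_of_mul_le_card {α β : Type*} [DecidableEq β]
    [Fintype β] [Nonempty β] (f : α → β) {s : Finset α} {n : ℕ}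
    (hn : Fintype.card β * n ≤ s.card) :
    ∃ t ⊆ s, t.card = n ∧ ∃ c, ∀ x ∈ t, f x = c := by
  obtain ⟨c, -, hc⟩ := Finset.exists_le_card_fiber_of_mul_le_card_of_maps_to
    (fun a _ => Finset.mem_univ (f a)) Finset.univ_nonempty hn
  obtain ⟨t, hts, htn⟩ := Finset.exists_subset_card_eq hc
  exact ⟨t, hts.trans (Finset.filter_subset _ _), htn, c,
    fun x hx => (Finset.mem_filter.1 (hts hx)).2⟩

theorem pairwise_not_lt_sort {V : Type*} [PartialOrder V] (r : V → V → Prop) [DecidableRel r]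
    [IsTrans V r] [Std.Antisymm r] [Std.Total r] (hr : ∀ a b, a ≤ b → r a b) (S : Finset V) :
    (S.sort r).Pairwise (fun u v => ¬ v < u) :=
  ((S.pairwise_sort r).and (S.sort_nodup r)).imp fun ⟨huv, hne⟩ hvu =>
    hne (antisymm huv (hr _ _ hvu.le))

theorem exists_isTopSort_eq_append_perm {V : Type*} [Fintype V] [PartialOrder V]
    {A : Finset V} (hA : IsAntichain (· ≤ ·) (A : Set V)) :
    ∃ σ : List V, IsTopSort σ ∧ ∃ p q s : List V, σ = p ++ q ++ s ∧ q.Perm A.toList := by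
  classical
  obtain ⟨r, _, hle⟩ := extend_partialOrder ((· ≤ ·) : V → V → Prop)
  let D : Finset V := {v | ∀ a ∈ A, ¬ a ≤ v}
  let U : Finset V := {v | v ∉ A ∧ ∃ a ∈ A, a ≤ v}
  refine ⟨D.sort r ++ A.sort r ++ U.sort r, ⟨?_, ?_, ?_⟩, _, _, _, rfl, A.sort_perm_toList r⟩
  · simp only [List.nodup_append, Finset.sort_nodup, List.mem_append, Finset.mem_sort, D, U,
      Finset.mem_filter, Finset.mem_univ, true_and]
    grind
  · intro v
    simp only [List.mem_append, Finset.mem_sort, D, U, Finset.mem_filter, Finset.mem_univ, true_and]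
    grind
  · simp only [List.pairwise_append, pairwise_not_lt_sort r hle, List.mem_append, Finset.mem_sort,
      D, U, Finset.mem_filter, Finset.mem_univ, true_and]
    refine ⟨fun u hu v hv hvu => hu v hv hvu.le, ?_⟩
    rintro u (hu | hu) v ⟨-, a, ha, hav⟩ hvu
    · exact hu a ha (hav.trans hvu.le)
    · exact hA ha hu (hav.trans_lt hvu).ne (hav.trans hvu.le)

/-- if a finite `{a,b}`-labeled DAG contains an antichain of cardinality
`2i`, then it has a topological sort whose achieved word contains `a^i` or `b^i` as a
factor. -/
theorem stmt10 {V : Type*} [Fintype V] [PartialOrder V] (ℓ : V → AB) (i : ℕ)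
    (C : Finset V) (hcard : C.card = 2 * i)
    (hanti : IsAntichain (· ≤ ·) (C : Set V)) :
    ∃ σ : List V, IsTopSort σ ∧
      ∃ p s : List AB,
        σ.map ℓ = p ++ List.replicate i AB.a ++ s ∨
        σ.map ℓ = p ++ List.replicate i AB.b ++ s := by
  obtain ⟨A, hAC, hAcard, c, hAc⟩ :=
    Finset.exists_subset_card_eq_forall_eq_of_mul_le_card ℓ (n := i) (by rw [card_AB, hcard])
  obtain ⟨σ, hσ, p, q, s, rfl, hq⟩ := exists_isTopSort_eq_append_perm (hanti.subset hAC)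
  have hword : q.map ℓ = List.replicate i c := by
    refine List.eq_replicate_iff.2
      ⟨by rw [List.length_map, hq.length_eq, Finset.length_toList, hAcard], ?_⟩
    intro x hx
    obtain ⟨v, hv, rfl⟩ := List.mem_map.1 hx
    exact hAc v (Finset.mem_toList.1 (hq.subset hv))
  refine ⟨_, hσ, p.map ℓ, s.map ℓ, ?_⟩
  cases c <;> simp [hword]

end CTS
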